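/- arXiv:2312.07270 — 4 statements merged into one kernel-verified Lean document; each statement's English description precedes it below -/
import Mathlib

section
/- Let (ℓⁿ) for n ∈ ℕ be nonnegative reals with ∑ₙ ℓⁿ ≤ ℓ for some ℓ > 0, and suppose for each n a nonnegative random variable Mⁿ satisfies P[Mⁿ ≥ x] ≤ 2·exp(−x²/(2ℓⁿ)) for all x > 0 (with the convention that this probability is 0 when ℓⁿ = 0). Then for M = supₙ Mⁿ and all x ≥ √(4ℓ/e), P[M ≥ x] ≤ 2·exp(−x²/(4ℓ)). -/
/-! Union bound over `n`. Since `ℓⁿ/ℓ ∈ (0, 1]`, the elementary inequality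
`exp (-x²/(2ℓⁿ)) ≤ (ℓⁿ/ℓ) · exp (-x²/(4ℓ))` (valid once `x² ≥ 4ℓ/3`) lets the weights `ℓⁿ/ℓ`,
which sum to at most `1`, absorb the union bound. The event `x ≤ supₙ Mⁿ` is only contained in
`⋃ₙ {y ≤ Mⁿ}` for `y < x`, so the bound is proved at every `y ∈ (√(4ℓ/3), x)` and passed to the
limit `y → x`; the threshold `√(4ℓ/e)` exceeds `√(4ℓ/3)` because `e < 3`. -/

open MeasureTheory Set Filter Real

-- `log h ≥ 1/2 - 2/(3h)` is the tangent bound `log (3h/2) ≥ 1 - 2/(3h)` together with `log (3/2) ≤ 1/2`.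
lemma neg_div_le_log_sub_half {h s : ℝ} (hh0 : 0 < h) (hh1 : h ≤ 1) (hs : 2 / 3 ≤ s) :
    -(s / h) ≤ log h - s / 2 := by
  have hlog : 1 / 2 - 2 / (3 * h) ≤ log h := by
    have htangent := one_sub_inv_le_log_of_pos (show 0 < 3 / 2 * h by positivity)
    have hlog32 := log_le_sub_one_of_pos (show (0 : ℝ) < 3 / 2 by norm_num)
    rw [log_mul (by norm_num) hh0.ne', mul_inv, show (3 / 2 : ℝ)⁻¹ * h⁻¹ = 2 / (3 * h) by
      field_simp] at htangent
    linarith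
  have hdiv : s - 2 / 3 ≤ (s - 2 / 3) / h := le_div_self (by linarith) hh0 hh1
  have hsplit : (s - 2 / 3) / h = s / h - 2 / (3 * h) := by field_simp
  linarith

lemma exp_neg_div_le_mul_exp_neg_half {h s : ℝ} (hh0 : 0 < h) (hh1 : h ≤ 1) (hs : 2 / 3 ≤ s) :
    exp (-(s / h)) ≤ h * exp (-(s / 2)) := by
  calc exp (-(s / h)) ≤ exp (log h + -(s / 2)) := by
        gcongr; linarith [neg_div_le_log_sub_half hh0 hh1 hs]
    _ = h * exp (-(s / 2)) := by rw [exp_add, exp_log hh0]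

lemma exp_neg_sq_div_le_mul_exp_neg_sq_div {ℓn ℓ y : ℝ} (hℓn : 0 < ℓn) (hℓn_le : ℓn ≤ ℓ)
    (hy : 4 * ℓ / 3 ≤ y ^ 2) :
    exp (-y ^ 2 / (2 * ℓn)) ≤ ℓn / ℓ * exp (-y ^ 2 / (4 * ℓ)) := by
  have hℓ : 0 < ℓ := hℓn.trans_le hℓn_le
  have hs : 2 / 3 ≤ y ^ 2 / (2 * ℓ) := by
    rw [le_div_iff₀ (by positivity)]; linarith
  have key := exp_neg_div_le_mul_exp_neg_half (div_pos hℓn hℓ) ((div_le_one hℓ).2 hℓn_le) hs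
  convert key using 3
  · field_simp
  · field_simp; ring

lemma measure_le_ofReal_of_subgaussian_tail {Ω : Type*} [MeasurableSpace Ω] {μ : Measure Ω}
    {Mn : Ω → ℝ} {ℓn ℓ y : ℝ} (hℓn : 0 ≤ ℓn) (hℓn_le : ℓn ≤ ℓ) (hy : 4 * ℓ / 3 ≤ y ^ 2)
    (htail : if ℓn = 0 then μ {ω | y ≤ Mn ω} = 0
      else μ {ω | y ≤ Mn ω} ≤ ENNReal.ofReal (2 * exp (-y ^ 2 / (2 * ℓn)))) :
    μ {ω | y ≤ Mn ω} ≤ ENNReal.ofReal (ℓn / ℓ * (2 * exp (-y ^ 2 / (4 * ℓ)))) := by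
  split_ifs at htail with hzero
  · simp [htail]
  · refine htail.trans (ENNReal.ofReal_le_ofReal ?_)
    have := exp_neg_sq_div_le_mul_exp_neg_sq_div (lt_of_le_of_ne hℓn (Ne.symm hzero)) hℓn_le hy
    linarith

lemma measure_iUnion_le_ofReal_of_weights {Ω ι : Type*} [MeasurableSpace Ω] [Countable ι]
    (μ : Measure Ω) (s : ι → Set Ω) {w : ι → ℝ} {C : ℝ} (hw : ∀ i, 0 ≤ w i) (hw_sum : Summable w)
    (hw_le : ∑' i, w i ≤ 1) (hC : 0 ≤ C) (hs : ∀ i, μ (s i) ≤ ENNReal.ofReal (w i * C)) :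
    μ (⋃ i, s i) ≤ ENNReal.ofReal C := by
  calc μ (⋃ i, s i) ≤ ∑' i, μ (s i) := measure_iUnion_le s
    _ ≤ ∑' i, ENNReal.ofReal (w i * C) := ENNReal.tsum_le_tsum hs
    _ = ENNReal.ofReal ((∑' i, w i) * C) := by
        rw [← tsum_mul_right, ENNReal.ofReal_tsum_of_nonneg (fun i => mul_nonneg (hw i) hC)
          (hw_sum.mul_right C)]
    _ ≤ ENNReal.ofReal C := ENNReal.ofReal_le_ofReal (mul_le_of_le_one_left hC hw_le)

lemma setOf_le_iSup_subset_iUnion {Ω ι α : Type*} [ConditionallyCompleteLinearOrder α]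
    [Nonempty ι] (f : ι → Ω → α) {x y : α} (hyx : y < x) :
    {ω | x ≤ ⨆ i, f i ω} ⊆ ⋃ i, {ω | y ≤ f i ω} := fun _ hω =>
  let ⟨i, hi⟩ := exists_lt_of_lt_ciSup (hyx.trans_le hω)
  mem_iUnion.2 ⟨i, hi.le⟩

theorem stmt_2_general {Ω : Type*} [MeasurableSpace Ω] (μ : Measure Ω)
    (ℓseq : ℕ → ℝ) (ℓ : ℝ) (hℓ : 0 < ℓ)
    (hnonneg : ∀ n, 0 ≤ ℓseq n)
    (hsum : Summable ℓseq) (hle : ∑' n, ℓseq n ≤ ℓ)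
    (M : ℕ → Ω → ℝ)
    (htail : ∀ n x, 0 < x →
      (if ℓseq n = 0 then μ {ω | x ≤ M n ω} = 0
       else μ {ω | x ≤ M n ω} ≤ ENNReal.ofReal (2 * Real.exp (-x ^ 2 / (2 * ℓseq n)))))
    (x : ℝ) (hx : Real.sqrt (4 * ℓ / Real.exp 1) ≤ x) :
    μ {ω | x ≤ ⨆ n, M n ω} ≤ ENNReal.ofReal (2 * Real.exp (-x ^ 2 / (4 * ℓ))) := by
  have hℓseq_le (n : ℕ) : ℓseq n ≤ ℓ := (hsum.le_tsum n fun m _ => hnonneg m).trans hle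
  have hunion (y : ℝ) (hy : 0 < y) (hy2 : 4 * ℓ / 3 ≤ y ^ 2) :
      μ (⋃ n, {ω | y ≤ M n ω}) ≤ ENNReal.ofReal (2 * exp (-y ^ 2 / (4 * ℓ))) :=
    measure_iUnion_le_ofReal_of_weights μ _ (fun n => div_nonneg (hnonneg n) hℓ.le)
      (hsum.div_const ℓ) (by rw [tsum_div_const]; exact div_le_one_of_le₀ hle hℓ.le)
      (by positivity) fun n =>
        measure_le_ofReal_of_subgaussian_tail (hnonneg n) (hℓseq_le n) hy2 (htail n y hy)
  have hthreshold : sqrt (4 * ℓ / 3) < x :=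
    (sqrt_lt_sqrt (by positivity) (div_lt_div_of_pos_left (by positivity) (exp_pos 1)
      exp_one_lt_three)).trans_le hx
  have hcont : Continuous fun y : ℝ => ENNReal.ofReal (2 * exp (-y ^ 2 / (4 * ℓ))) :=
    ENNReal.continuous_ofReal.comp (by fun_prop)
  refine ge_of_tendsto (hcont.tendsto x |>.mono_left (nhdsWithin_le_nhds (s := Iio x))) ?_
  filter_upwards [Ioo_mem_nhdsLT hthreshold] with y ⟨hy_gt, hy_lt⟩
  have hy : 0 < y := (sqrt_nonneg _).trans_lt hy_gt
  exact (measure_mono (setOf_le_iSup_subset_iUnion M hy_lt)).trans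
    (hunion y hy ((sqrt_lt' hy).1 hy_gt).le)

theorem stmt_2 {Ω : Type*} [MeasurableSpace Ω] (μ : Measure Ω) [IsProbabilityMeasure μ]
    (ℓseq : ℕ → ℝ) (ℓ : ℝ) (hℓ : 0 < ℓ)
    (hnonneg : ∀ n, 0 ≤ ℓseq n)
    (hsum : Summable ℓseq) (hle : ∑' n, ℓseq n ≤ ℓ)
    (M : ℕ → Ω → ℝ) (hMnonneg : ∀ n ω, 0 ≤ M n ω)
    (htail : ∀ n x, 0 < x →
      (if ℓseq n = 0 then μ {ω | x ≤ M n ω} = 0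
       else μ {ω | x ≤ M n ω} ≤ ENNReal.ofReal (2 * Real.exp (-x ^ 2 / (2 * ℓseq n)))))
    (x : ℝ) (hx : Real.sqrt (4 * ℓ / Real.exp 1) ≤ x) :
    μ {ω | x ≤ ⨆ n, M n ω} ≤ ENNReal.ofReal (2 * Real.exp (-x ^ 2 / (4 * ℓ))) :=
  stmt_2_general μ ℓseq ℓ hℓ hnonneg hsum hle M htail x hx
end

section
/- Let Z ⊆ [0,1] be a compact set with zero Lebesgue measure. Suppose (Vⱼ)_{j=1}^n is a finite cover of Z by intervals that are open in [0,1]. Then there exists a finite cover (V′ⱼ) of Z by pairwise disjoint intervals open in [0,1], such that each V′ⱼ is contained in some Vᵢ (and in particular ∑ⱼ |V′ⱼ|^α ≤ ∑ᵢ |Vᵢ|^α for any α > 0, where |·| denotes interval length). -/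
/-!
Induct on the number of intervals. Let `x = max Z`, lying in the interval `(aᵢ, bᵢ)`. Near `aᵢ`,
the compact set `Z` is covered by the other intervals, since `Z` minus their union is a closed set
avoiding `aᵢ`. As `Z` is null, we may cut at a point `t ∉ Z` slightly to the right of `aᵢ`: the
part of `Z` left of `t` is covered by the other intervals, which by induction can be made disjoint
and are then truncated at `t`, while the part right of `t` lies in `(t, bᵢ)`. Intersecting with
`[0,1]` at the end, each new interval lies in the old one with the same index, so the sums of
`|·|^α` decrease termwise.
-/

/-- An interval which is open as a subset of `[0,1]`, i.e. of the form
`[0,1] ∩ (a,b)` (this includes intervals like `[0,b)` and `(a,1]`). -/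
def IsOpenSubinterval (V : Set ℝ) : Prop :=
  ∃ a b : ℝ, V = Set.Icc (0 : ℝ) 1 ∩ Set.Ioo a b

open Set MeasureTheory

theorem exists_notMem_of_volume_eq_zero_disjoint_Ioc {Z K : Set ℝ} (hZ : volume Z = 0)
    (hK : IsClosed K) {a b : ℝ} (hab : a < b) (ha : a ∉ K) :
    ∃ t ∈ Ioo a b, t ∉ Z ∧ Disjoint (Ioc a t) K := by
  obtain ⟨u, hau, hu⟩ : ∃ u ∈ Ioi a, Ioo a u ⊆ Kᶜ :=
    mem_nhdsGT_iff_exists_Ioo_subset.1 (nhdsWithin_le_nhds (hK.isOpen_compl.mem_nhds ha))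
  have hdense : Dense Zᶜ := volume.dense_of_ae (measure_eq_zero_iff_ae_notMem.1 hZ)
  obtain ⟨t, htZ, hat, htub⟩ := hdense.exists_between (lt_min hau hab)
  refine ⟨t, ⟨hat, htub.trans_le (min_le_right _ _)⟩, htZ, ?_⟩
  exact subset_compl_iff_disjoint_right.1
    ((Ioc_subset_Ioo_right (htub.trans_le (min_le_left _ _))).trans hu)

theorem exists_cut_of_isCompact {ι : Type*} [DecidableEq ι] {s : Finset ι} {a b : ι → ℝ}
    {Z : Set ℝ} (hZc : IsCompact Z) (hZ0 : volume Z = 0) (hZne : Z.Nonempty)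
    (hcover : Z ⊆ ⋃ i ∈ s, Ioo (a i) (b i)) :
    ∃ i ∈ s, ∃ t, a i < t ∧ t ∉ Z ∧ Z ∩ Iic t ⊆ ⋃ j ∈ s.erase i, Ioo (a j) (b j) ∧
      Z ∩ Ioi t ⊆ Ioo t (b i) := by
  have hxZ := hZc.sSup_mem hZne
  obtain ⟨i, hi, hxi⟩ := mem_iUnion₂.1 (hcover hxZ)
  have hlow : ∀ z ∈ Z, z ≤ a i → z ∈ ⋃ j ∈ s.erase i, Ioo (a j) (b j) := by
    intro z hz hza
    obtain ⟨j, hj, hzj⟩ := mem_iUnion₂.1 (hcover hz)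
    have hji : j ≠ i := by rintro rfl; exact hza.not_gt hzj.1
    exact mem_iUnion₂.2 ⟨j, Finset.mem_erase.2 ⟨hji, hj⟩, hzj⟩
  set K := Z \ ⋃ j ∈ s.erase i, Ioo (a j) (b j)
  have hK : IsClosed K := hZc.isClosed.sdiff (isOpen_biUnion fun _ _ => isOpen_Ioo)
  obtain ⟨t, ⟨hat, htb⟩, htZ, hdisj⟩ := exists_notMem_of_volume_eq_zero_disjoint_Ioc hZ0 hK
    (hxi.1.trans hxi.2) (fun h => h.2 (hlow _ h.1 le_rfl))
  refine ⟨i, hi, t, hat, htZ, ?_, ?_⟩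
  · rintro z ⟨hz, hzt⟩
    by_contra hzU
    have hza : z ≤ a i := not_lt.1 fun haz => hdisj.ne_of_mem ⟨haz, hzt⟩ ⟨hz, hzU⟩ rfl
    exact hzU (hlow z hz hza)
  · rintro z ⟨hz, htz⟩
    exact ⟨htz, (le_csSup hZc.bddAbove hz).trans_lt hxi.2⟩

theorem exists_disjoint_Ioo_refinement {ι : Type*} (s : Finset ι) (a b : ι → ℝ) {Z : Set ℝ}
    (hZc : IsCompact Z) (hZ0 : volume Z = 0) (hcover : Z ⊆ ⋃ i ∈ s, Ioo (a i) (b i)) :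
    ∃ a' b' : ι → ℝ, (∀ i, Ioo (a' i) (b' i) ⊆ Ioo (a i) (b i)) ∧
      Pairwise (Function.onFun Disjoint fun i => Ioo (a' i) (b' i)) ∧
      Z ⊆ ⋃ i ∈ s, Ioo (a' i) (b' i) := by
  classical
  induction s using Finset.strongInduction generalizing Z with
  | H s ih =>
    rcases Z.eq_empty_or_nonempty with rfl | hZne
    · exact ⟨a, a, fun i => by simp, fun i j _ => by simp [Function.onFun], empty_subset _⟩
    obtain ⟨i, hi, t, hat, htZ, hleft, hright⟩ := exists_cut_of_isCompact hZc hZ0 hZne hcover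
    obtain ⟨a₀, b₀, hsub₀, hdisj₀, hcover₀⟩ := ih (s.erase i) (Finset.erase_ssubset hi)
      (hZc.inter_right isClosed_Iic) (measure_mono_null inter_subset_left hZ0) hleft
    refine ⟨Function.update a₀ i t, Function.update (fun j => min (b₀ j) t) i (b i),
      fun j => ?_, fun j k hjk => ?_, fun z hz => ?_⟩
    · rcases eq_or_ne j i with rfl | hji
      · simpa using Ioo_subset_Ioo_left hat.le
      · simpa [hji] using (Ioo_subset_Ioo_right (min_le_left _ _)).trans (hsub₀ j)
    · rcases eq_or_ne j i with rfl | hji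
      · simp [Function.onFun, hjk.symm]
      rcases eq_or_ne k i with rfl | hki
      · simp [Function.onFun, hji]
      · simpa [Function.onFun, hji, hki] using
          (hdisj₀ hjk).mono (Ioo_subset_Ioo_right (min_le_left _ _))
            (Ioo_subset_Ioo_right (min_le_left _ _))
    · rcases le_or_gt z t with hzt | htz
      · obtain ⟨j, hj, hzj⟩ := mem_iUnion₂.1 (hcover₀ ⟨hz, hzt⟩)
        have hji := Finset.ne_of_mem_erase hj
        have hzt' : z < t := hzt.lt_of_ne fun h => htZ (h ▸ hz)
        exact mem_iUnion₂.2
          ⟨j, Finset.mem_of_mem_erase hj, by simpa [hji] using ⟨hzj.1, hzj.2, hzt'⟩⟩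
      · exact mem_iUnion₂.2 ⟨i, hi, by simpa using hright ⟨hz, htz⟩⟩

theorem stmt_11 (Z : Set ℝ) (hZsub : Z ⊆ Set.Icc (0 : ℝ) 1) (hZcomp : IsCompact Z)
    (hZnull : MeasureTheory.volume Z = 0)
    (n : ℕ) (V : Fin n → Set ℝ) (hV : ∀ i, IsOpenSubinterval (V i))
    (hcover : Z ⊆ ⋃ i, V i) :
    ∃ (m : ℕ) (V' : Fin m → Set ℝ) (ι : Fin m → Fin n),
      (∀ j, IsOpenSubinterval (V' j)) ∧
      (Pairwise (Function.onFun Disjoint V')) ∧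
      (Z ⊆ ⋃ j, V' j) ∧
      Function.Injective ι ∧
      (∀ j, V' j ⊆ V (ι j)) ∧
      (∀ α : ℝ, 0 < α →
        ∑ j, Metric.diam (V' j) ^ α ≤ ∑ i, Metric.diam (V i) ^ α) := by
  choose a b hab using hV
  obtain rfl : V = fun i => Icc 0 1 ∩ Ioo (a i) (b i) := funext hab
  have hcoverIoo : Z ⊆ ⋃ i ∈ Finset.univ, Ioo (a i) (b i) := fun z hz => by
    obtain ⟨i, hzi⟩ := mem_iUnion.1 (hcover hz)
    exact mem_iUnion₂.2 ⟨i, Finset.mem_univ i, hzi.2⟩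
  obtain ⟨a', b', hsub, hdisj, hcover'⟩ :=
    exists_disjoint_Ioo_refinement Finset.univ a b hZcomp hZnull hcoverIoo
  have hV'sub : ∀ i, Icc 0 1 ∩ Ioo (a' i) (b' i) ⊆ Icc 0 1 ∩ Ioo (a i) (b i) :=
    fun i => inter_subset_inter_right _ (hsub i)
  refine ⟨n, fun i => Icc 0 1 ∩ Ioo (a' i) (b' i), id, fun i => ⟨a' i, b' i, rfl⟩,
    fun i j hij => (hdisj hij).mono inter_subset_right inter_subset_right, fun z hz => ?_,
    Function.injective_id, hV'sub, fun α hα => Finset.sum_le_sum fun i _ => ?_⟩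
  · obtain ⟨i, -, hzi⟩ := mem_iUnion₂.1 (hcover' hz)
    exact mem_iUnion.2 ⟨i, hZsub hz, hzi⟩
  · exact Real.rpow_le_rpow Metric.diam_nonneg
      (Metric.diam_mono (hV'sub i) (Metric.isBounded_Icc 0 1 |>.subset inter_subset_left)) hα.le
end

section
/- Let K ⊆ ℂ be compact and let L ≥ 0. Let f : ℂ → ℝ be continuous, and suppose that |f(z) − f(w)| ≤ L·|z − w| whenever the closed line segment from z to w does not intersect K. Then for any piecewise-linear path γ from z to w consisting of finitely many line segments and intersecting K in at most finitely many points, one has |f(z) − f(w)| ≤ L·ℓ(γ), where ℓ(γ) denotes the length of γ. -/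
/-!
Parametrize a segment `[a, b]` affinely by `t ∈ [0, 1]`. On every closed parameter interval
that misses the finitely many parameters of points of `K`, the hypothesis gives the Lipschitz
bound; by continuity it survives passing to the closure of an open interval free of such
parameters, and the triangle inequality glues the finitely many pieces. Summing over the
segments of the polygon gives the estimate.
-/

open Set Filter Topology

section Interval

variable {α : Type*} [PseudoMetricSpace α] {g : ℝ → α} {C : ℝ}

theorem dist_le_mul_of_forall_Ioo (hg : Continuous g) {s t : ℝ} (hst : s ≤ t)
    (h : ∀ u v, s < u → u ≤ v → v < t → dist (g u) (g v) ≤ C * (v - u)) :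
    dist (g s) (g t) ≤ C * (t - s) := by
  rcases hst.eq_or_lt with rfl | hlt
  · simp
  -- shrink `[s, t]` symmetrically to `[s + ε, t - ε]` and let `ε → 0⁺`
  have hlim : Tendsto (fun ε => dist (g (s + ε)) (g (t - ε))) (𝓝[>] 0)
      (𝓝 (dist (g s) (g t))) := by
    have : Continuous fun ε => dist (g (s + ε)) (g (t - ε)) := by fun_prop
    simpa using this.continuousWithinAt.tendsto (x := (0 : ℝ)) (s := Ioi 0)
  have hlim' : Tendsto (fun ε => C * ((t - ε) - (s + ε))) (𝓝[>] 0) (𝓝 (C * (t - s))) := by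
    have : Continuous fun ε : ℝ => C * ((t - ε) - (s + ε)) := by fun_prop
    simpa using this.continuousWithinAt.tendsto (x := (0 : ℝ)) (s := Ioi 0)
  refine le_of_tendsto_of_tendsto hlim hlim' ?_
  have hsmall : Ioo (0 : ℝ) ((t - s) / 2) ∈ 𝓝[>] 0 := Ioo_mem_nhdsGT (by linarith)
  filter_upwards [hsmall] with ε hε
  exact h _ _ (by linarith [hε.1]) (by linarith [hε.2]) (by linarith [hε.1])

theorem dist_le_mul_of_finite_exceptions (hg : Continuous g) {B : Set ℝ} {s t : ℝ}
    (hB : (B ∩ Icc s t).Finite)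
    (h : ∀ u v, u ≤ v → Disjoint (Icc u v) B → dist (g u) (g v) ≤ C * (v - u))
    (hst : s ≤ t) : dist (g s) (g t) ≤ C * (t - s) := by
  suffices key : ∀ T : Finset ℝ, ∀ u v, u ≤ v → B ∩ Ioo u v ⊆ T →
      dist (g u) (g v) ≤ C * (v - u) from
    key hB.toFinset s t hst (by simpa using inter_subset_inter_right B Ioo_subset_Icc_self)
  intro T
  induction T using Finset.induction_on with
  | empty =>
    intro u v huv hT
    refine dist_le_mul_of_forall_Ioo hg huv fun u' v' hu' huv' hv' => h u' v' huv' ?_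
    refine disjoint_left.mpr fun x hx hxB => ?_
    simpa using hT ⟨hxB, hu'.trans_le hx.1, hx.2.trans_lt hv'⟩
  | insert x T _ ih =>
    intro u v huv hT
    by_cases hx : x ∈ Ioo u v
    · have hleft : B ∩ Ioo u x ⊆ T := fun y hy => by
        have := hT ⟨hy.1, hy.2.1, hy.2.2.trans hx.2⟩
        simp only [Finset.coe_insert, mem_insert_iff] at this
        exact this.resolve_left hy.2.2.ne
      have hright : B ∩ Ioo x v ⊆ T := fun y hy => by
        have := hT ⟨hy.1, hx.1.trans hy.2.1, hy.2.2⟩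
        simp only [Finset.coe_insert, mem_insert_iff] at this
        exact this.resolve_left hy.2.1.ne'
      calc dist (g u) (g v) ≤ dist (g u) (g x) + dist (g x) (g v) := dist_triangle _ _ _
        _ ≤ C * (x - u) + C * (v - x) :=
          add_le_add (ih u x hx.1.le hleft) (ih x v hx.2.le hright)
        _ = C * (v - u) := by ring
    · refine ih u v huv fun y hy => ?_
      have := hT hy
      simp only [Finset.coe_insert, mem_insert_iff] at this
      exact this.resolve_left fun hyx => hx (hyx ▸ hy.2)

end Interval

section Polygon

variable {E α : Type*} [NormedAddCommGroup E] [NormedSpace ℝ E] [PseudoMetricSpace α]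
  {K : Set E} {L : ℝ} {f : E → α}

theorem dist_le_mul_dist_of_finite_inter_segment (hf : Continuous f)
    (hseg : ∀ z w, Disjoint (segment ℝ z w) K → dist (f z) (f w) ≤ L * dist z w)
    {a b : E} (hfin : (K ∩ segment ℝ a b).Finite) :
    dist (f a) (f b) ≤ L * dist a b := by
  rcases eq_or_ne a b with rfl | hab
  · simp
  let γ : ℝ →ᵃ[ℝ] E := AffineMap.lineMap a b
  have hγ : Continuous γ := AffineMap.lineMap_continuous
  have hB : (γ ⁻¹' K ∩ Icc 0 1).Finite := by
    refine (hfin.preimage (AffineMap.lineMap_injective ℝ hab).injOn).subset ?_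
    rintro t ⟨htK, ht⟩
    exact ⟨htK, segment_eq_image_lineMap ℝ a b ▸ mem_image_of_mem _ ht⟩
  have hpiece : ∀ u v, u ≤ v → Disjoint (Icc u v) (γ ⁻¹' K) →
      dist (f (γ u)) (f (γ v)) ≤ L * dist a b * (v - u) := by
    intro u v huv hdisj
    have hsegK : Disjoint (segment ℝ (γ u) (γ v)) K := by
      rw [← image_segment, segment_eq_Icc huv]
      exact disjoint_image_left.mpr hdisj
    calc dist (f (γ u)) (f (γ v)) ≤ L * dist (γ u) (γ v) := hseg _ _ hsegK
      _ = L * dist a b * (v - u) := by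
        rw [dist_lineMap_lineMap, dist_comm, Real.dist_eq, abs_of_nonneg (by linarith)]
        ring
  simpa [γ] using dist_le_mul_of_finite_exceptions (hf.comp hγ) hB hpiece zero_le_one

theorem dist_le_mul_sum_dist_of_finite_inter_polygon (hf : Continuous f)
    (hseg : ∀ z w, Disjoint (segment ℝ z w) K → dist (f z) (f w) ≤ L * dist z w)
    {N : ℕ} {p : ℕ → E}
    (hfin : (K ∩ ⋃ i ∈ Finset.range N, segment ℝ (p i) (p (i + 1))).Finite) :
    dist (f (p 0)) (f (p N)) ≤ L * ∑ i ∈ Finset.range N, dist (p i) (p (i + 1)) := by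
  rw [Finset.mul_sum]
  refine (dist_le_range_sum_dist (f ∘ p) N).trans (Finset.sum_le_sum fun i hi => ?_)
  refine dist_le_mul_dist_of_finite_inter_segment hf hseg (hfin.subset ?_)
  exact inter_subset_inter_right K <|
    subset_biUnion_of_mem (u := fun i => segment ℝ (p i) (p (i + 1))) hi

end Polygon

theorem stmt_14_general (K : Set ℂ) (L : ℝ)
    (f : ℂ → ℝ) (hf : Continuous f)
    (hseg : ∀ z w : ℂ, Disjoint (segment ℝ z w) K → |f z - f w| ≤ L * dist z w)
    (N : ℕ) (p : ℕ → ℂ)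
    (hfin : (K ∩ ⋃ i ∈ Finset.range N, segment ℝ (p i) (p (i + 1))).Finite) :
    |f (p 0) - f (p N)| ≤ L * ∑ i ∈ Finset.range N, dist (p i) (p (i + 1)) := by
  simp only [← Real.dist_eq] at hseg ⊢
  exact dist_le_mul_sum_dist_of_finite_inter_polygon hf hseg hfin

theorem stmt_14 (K : Set ℂ) (hK : IsCompact K) (L : ℝ) (hL : 0 ≤ L)
    (f : ℂ → ℝ) (hf : Continuous f)
    (hseg : ∀ z w : ℂ, Disjoint (segment ℝ z w) K → |f z - f w| ≤ L * dist z w)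
    (N : ℕ) (p : ℕ → ℂ)
    (hfin : (K ∩ ⋃ i ∈ Finset.range N, segment ℝ (p i) (p (i + 1))).Finite) :
    |f (p 0) - f (p N)| ≤ L * ∑ i ∈ Finset.range N, dist (p i) (p (i + 1)) :=
  stmt_14_general K L f hf hseg N p hfin
end

section
/- Let K ⊆ ℂ be compact, C > 0, and let f : ℂ → ℝ be continuous and L-Lipschitz on every line segment avoiding K (i.e. |f(z)−f(w)| ≤ L|z−w| whenever the segment [z,w] misses K). Suppose that for every z, w ∈ ℂ and every ε > 0 there is a path γ from z to w which is a finite union of line segments, meets K in only finitely many points, and has length at most C·|z − w| + ε. Then f is globally Lipschitz on ℂ with Lipschitz constant at most C·L. -/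
/-- Splitting lemma: if the bound holds on subintervals whose open interior avoids a
finite bad set, it holds on the whole interval, by telescoping across bad points. -/
lemma lemC (F : ℝ → ℝ) (c : ℝ) (S : Finset ℝ) (u₀ v₀ : ℝ)
    (hyp : ∀ s t, u₀ ≤ s → s ≤ t → t ≤ v₀ → (∀ x ∈ S, x ∉ Set.Ioo s t) →
      |F t - F s| ≤ c * (t - s)) :
    ∀ u v, u₀ ≤ u → u ≤ v → v ≤ v₀ → |F v - F u| ≤ c * (v - u) := by
  classical
  suffices h : ∀ n : ℕ, ∀ u v, u₀ ≤ u → u ≤ v → v ≤ v₀ →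
      (S.filter (· ∈ Set.Ioo u v)).card ≤ n → |F v - F u| ≤ c * (v - u) by
    intro u v h1 h2 h3
    exact h _ u v h1 h2 h3 le_rfl
  intro n
  induction n with
  | zero =>
    intro u v h1 h2 h3 hcard
    refine hyp u v h1 h2 h3 ?_
    intro x hx hmem
    have hmem2 : x ∈ S.filter (· ∈ Set.Ioo u v) := Finset.mem_filter.2 ⟨hx, hmem⟩
    rw [Finset.card_eq_zero.1 (Nat.le_zero.1 hcard)] at hmem2
    simp at hmem2
  | succ n ih =>
    intro u v h1 h2 h3 hcard
    by_cases hex : ∃ x ∈ S, x ∈ Set.Ioo u v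
    · obtain ⟨x, hxS, hxuv⟩ := hex
      have hx : x ∈ S.filter (· ∈ Set.Ioo u v) := Finset.mem_filter.2 ⟨hxS, hxuv⟩
      have key : ∀ a b : ℝ, Set.Ioo a b ⊆ Set.Ioo u v → x ∉ Set.Ioo a b →
          (S.filter (· ∈ Set.Ioo a b)).card ≤ n := by
        intro a b hsub hxnot
        have hsub2 : S.filter (· ∈ Set.Ioo a b) ⊆ (S.filter (· ∈ Set.Ioo u v)).erase x := by
          intro y hy
          rcases Finset.mem_filter.1 hy with ⟨hyS, hyab⟩
          refine Finset.mem_erase.2 ⟨?_, Finset.mem_filter.2 ⟨hyS, hsub hyab⟩⟩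
          rintro rfl; exact hxnot hyab
        have hc1 := Finset.card_le_card hsub2
        have hc2 := Finset.card_erase_of_mem hx
        omega
      have b1 := ih u x h1 hxuv.1.le (le_trans hxuv.2.le h3)
        (key u x (Set.Ioo_subset_Ioo le_rfl hxuv.2.le) (by simp))
      have b2 := ih x v (le_trans h1 hxuv.1.le) hxuv.2.le h3
        (key x v (Set.Ioo_subset_Ioo hxuv.1.le le_rfl) (by simp))
      have hsplit : F v - F u = (F v - F x) + (F x - F u) := by ring
      calc |F v - F u| ≤ |F v - F x| + |F x - F u| := by rw [hsplit]; exact abs_add_le _ _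
        _ ≤ c * (v - x) + c * (x - u) := add_le_add b2 b1
        _ = c * (v - u) := by ring
    · push_neg at hex
      exact hyp u v h1 h2 h3 hex

/-- Upgrade an estimate on strictly interior subintervals to the closed interval,
using continuity. -/
lemma lemOpen (F : ℝ → ℝ) (hF : Continuous F) (c : ℝ) (s t : ℝ) (hst : s ≤ t)
    (h : ∀ s' t', s < s' → s' ≤ t' → t' < t → |F t' - F s'| ≤ c * (t' - s')) :
    |F t - F s| ≤ c * (t - s) := by
  rcases eq_or_lt_of_le hst with rfl | hlt
  · simp
  · have hd : (0:ℝ) < t - s := sub_pos.2 hlt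
    set e : ℕ → ℝ := fun n => (t - s) / 2 * (1 / (n + 1)) with he
    have hepos : ∀ n : ℕ, 0 < e n := by
      intro n
      have : (0:ℝ) < 1 / ((n:ℝ) + 1) := by positivity
      have h2 : (0:ℝ) < (t - s) / 2 := by linarith
      exact mul_pos h2 this
    have hele : ∀ n : ℕ, e n ≤ (t - s) / 2 := by
      intro n
      have h1 : (1:ℝ) / ((n:ℝ) + 1) ≤ 1 := by
        rw [div_le_one (by positivity)]
        simp
      have h2 : (0:ℝ) ≤ (t - s) / 2 := by linarith
      calc e n ≤ (t - s) / 2 * 1 := mul_le_mul_of_nonneg_left h1 h2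
        _ = (t - s) / 2 := mul_one _
    have he0 : Filter.Tendsto e Filter.atTop (nhds 0) := by
      have h1 : Filter.Tendsto (fun n : ℕ => 1 / ((n:ℝ) + 1)) Filter.atTop (nhds 0) :=
        tendsto_one_div_add_atTop_nhds_zero_nat
      rw [he]
      simpa using h1.const_mul ((t - s) / 2)
    set u : ℕ → ℝ := fun n => s + e n with hu
    set v : ℕ → ℝ := fun n => t - e n with hv
    have hut : Filter.Tendsto u Filter.atTop (nhds s) := by
      rw [hu]
      simpa using (tendsto_const_nhds (x := s)).add he0
    have hvt : Filter.Tendsto v Filter.atTop (nhds t) := by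
      rw [hv]
      simpa using (tendsto_const_nhds (x := t)).sub he0
    have hbound : ∀ n, |F (v n) - F (u n)| ≤ c * (v n - u n) := by
      intro n
      refine h (u n) (v n) (by simp [hu]; exact hepos n) ?_ (by simp [hv]; exact hepos n)
      have := hele n
      simp only [hu, hv]
      linarith
    have hL : Filter.Tendsto (fun n => |F (v n) - F (u n)|) Filter.atTop
        (nhds (|F t - F s|)) :=
      (((hF.tendsto t).comp hvt).sub ((hF.tendsto s).comp hut)).abs
    have hR : Filter.Tendsto (fun n => c * (v n - u n)) Filter.atTop
        (nhds (c * (t - s))) := (hvt.sub hut).const_mul c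
    exact le_of_tendsto_of_tendsto' hL hR hbound

/-- Lipschitz bound on a single segment meeting K in finitely many points. -/
lemma segLemma (K : Set ℂ) (L : ℝ) (f : ℂ → ℝ) (hf : Continuous f)
    (hseg : ∀ z w : ℂ, Disjoint (segment ℝ z w) K → |f z - f w| ≤ L * dist z w)
    (a b : ℂ) (hfin : (K ∩ segment ℝ a b).Finite) :
    |f a - f b| ≤ L * dist a b := by
  rcases eq_or_ne a b with rfl | hab
  · simp
  classical
  set g : ℝ →ᵃ[ℝ] ℂ := AffineMap.lineMap a b with hg
  have hginj : Function.Injective g := AffineMap.lineMap_injective ℝ hab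
  have hgc : Continuous g := AffineMap.lineMap_continuous
  have hSfin : {t : ℝ | t ∈ Set.Icc (0:ℝ) 1 ∧ g t ∈ K}.Finite := by
    refine (hfin.preimage (hginj.injOn)).subset ?_
    rintro t ⟨ht01, htK⟩
    refine ⟨htK, ?_⟩
    rw [segment_eq_image_lineMap]
    exact ⟨t, ht01, rfl⟩
  set S : Finset ℝ := hSfin.toFinset with hS
  set F : ℝ → ℝ := fun t => f (g t) with hF
  set c : ℝ := L * dist a b with hc
  have hdist : ∀ s' t' : ℝ, s' ≤ t' → dist (g s') (g t') = (t' - s') * dist a b := by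
    intro s' t' h
    have hsub : (g s' : ℂ) - g t' = (s' - t') • (b - a) := by
      simp only [hg, AffineMap.lineMap_apply_module]
      module
    rw [dist_eq_norm, hsub, norm_smul, Real.norm_eq_abs, abs_of_nonpos (by linarith)]
    rw [dist_eq_norm, ← norm_neg (a - b)]
    ring_nf
  have hyp : ∀ s t, (0:ℝ) ≤ s → s ≤ t → t ≤ 1 → (∀ x ∈ S, x ∉ Set.Ioo s t) →
      |F t - F s| ≤ c * (t - s) := by
    intro s t h0s hst ht1 hnb
    refine lemOpen F (hf.comp hgc) c s t hst ?_
    intro s' t' hs hsst htt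
    have hdisj : Disjoint (segment ℝ (g s') (g t')) K := by
      rw [Set.disjoint_left]
      rintro x hxseg hxK
      have : segment ℝ (g s') (g t') = g '' segment ℝ s' t' := (image_segment ℝ g s' t').symm
      rw [this, segment_eq_Icc hsst] at hxseg
      obtain ⟨r, hr, rfl⟩ := hxseg
      have hrS : r ∈ S := by
        rw [hS, Set.Finite.mem_toFinset]
        exact ⟨⟨by linarith [hr.1], by linarith [hr.2]⟩, hxK⟩
      exact hnb r hrS ⟨by linarith [hr.1], by linarith [hr.2]⟩
    have := hseg (g s') (g t') hdisj
    rw [hdist s' t' hsst] at this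
    calc |F t' - F s'| = |f (g s') - f (g t')| := abs_sub_comm _ _
      _ ≤ L * ((t' - s') * dist a b) := this
      _ = c * (t' - s') := by rw [hc]; ring
  have hmain := lemC F c S 0 1 hyp 0 1 le_rfl zero_le_one le_rfl
  have hF0 : F 0 = f a := by simp [hF, hg]
  have hF1 : F 1 = f b := by simp [hF, hg]
  rw [hF0, hF1] at hmain
  calc |f a - f b| = |f b - f a| := abs_sub_comm _ _
    _ ≤ c * (1 - 0) := hmain
    _ = L * dist a b := by rw [hc]; ring

theorem stmt_15 (K : Set ℂ) (hK : IsCompact K) (C L : ℝ) (hC : 0 < C) (hL : 0 ≤ L)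
    (f : ℂ → ℝ) (hf : Continuous f)
    (hseg : ∀ z w : ℂ, Disjoint (segment ℝ z w) K → |f z - f w| ≤ L * dist z w)
    (hpaths : ∀ z w : ℂ, ∀ ε > (0 : ℝ),
      ∃ (N : ℕ) (p : ℕ → ℂ), p 0 = z ∧ p N = w ∧
        (K ∩ ⋃ i ∈ Finset.range N, segment ℝ (p i) (p (i + 1))).Finite ∧
        ∑ i ∈ Finset.range N, dist (p i) (p (i + 1)) ≤ C * dist z w + ε) :
    ∀ z w : ℂ, |f z - f w| ≤ C * L * dist z w := by
  intro z w
  have key : ∀ ε > (0:ℝ), |f z - f w| ≤ C * L * dist z w + L * ε := by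
    intro ε hε
    obtain ⟨N, p, hp0, hpN, hfin, hlen⟩ := hpaths z w ε hε
    have hstep : ∀ i ∈ Finset.range N,
        |f (p i) - f (p (i+1))| ≤ L * dist (p i) (p (i+1)) := by
      intro i hi
      refine segLemma K L f hf hseg _ _ (hfin.subset ?_)
      apply Set.inter_subset_inter_right
      exact Set.subset_iUnion₂ (s := fun i (_ : i ∈ Finset.range N) =>
        segment ℝ (p i) (p (i+1))) i hi
    calc |f z - f w| = |∑ i ∈ Finset.range N, (f (p i) - f (p (i+1)))| := by
          rw [Finset.sum_range_sub' (fun i => f (p i)), hp0, hpN]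
      _ ≤ ∑ i ∈ Finset.range N, |f (p i) - f (p (i+1))| := Finset.abs_sum_le_sum_abs _ _
      _ ≤ ∑ i ∈ Finset.range N, L * dist (p i) (p (i+1)) := Finset.sum_le_sum hstep
      _ = L * ∑ i ∈ Finset.range N, dist (p i) (p (i+1)) := (Finset.mul_sum _ _ _).symm
      _ ≤ L * (C * dist z w + ε) := mul_le_mul_of_nonneg_left hlen hL
      _ = C * L * dist z w + L * ε := by ring
  refine le_of_forall_pos_le_add ?_
  intro δ hδ
  have h1 := key (δ / (L + 1)) (by positivity)
  have h2 : L * (δ / (L + 1)) ≤ δ := by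
    rw [mul_div_assoc', div_le_iff₀ (by linarith)]
    nlinarith
  linarith
end
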